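/- Let {x_k} be generated by the TRFD algorithm and suppose T ≥ 1 satisfies ψ_{p,Δ_*}(x_k) > ε for k = 0,...,T−1 (equivalently, 1 ≤ T ≤ T_g(ε)). Then |(U² ∪ U³) ∩ {0,...,T−1}| ≤ log₂(4 L_{h,p} max{σ, L_J} c_{p,2}(m) c_{2,p}(n)² Δ_0 / ((1−α)θ) · ε^{−1}) + |S ∩ {0,...,T−1}|. -/

import Mathlib

open scoped ENNReal

noncomputable section

/-- The `p`-norm on `ℝ^n`, for `p ∈ [1,∞]`. -/
def pNorm (p : ℝ≥0∞) {n : ℕ} (x : Fin n → ℝ) : ℝ :=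
  if p = ∞ then ⨆ i, |x i| else (∑ i, |x i| ^ p.toReal) ^ (1 / p.toReal)

/-- The Euclidean norm on `ℝ^n`. -/
def eucNorm {n : ℕ} (x : Fin n → ℝ) : ℝ := Real.sqrt (∑ i, x i ^ 2)

/-- The operator norm of a matrix, induced by Euclidean norms. -/
def opNorm2 {m n : ℕ} (A : Matrix (Fin m) (Fin n) ℝ) : ℝ :=
  sSup ((fun v => eucNorm (A.mulVec v)) '' {v | eucNorm v ≤ 1})

/-- Forward finite-difference approximation of the Jacobian of `F` at `x` with stepsize `τ`:
the `j`-th column is `(F (x + τ e_j) - F x) / τ`. -/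
def fdMatrix {n m : ℕ} (F : (Fin n → ℝ) → (Fin m → ℝ)) (x : Fin n → ℝ) (τ : ℝ) :
    Matrix (Fin m) (Fin n) ℝ :=
  Matrix.of fun i j => (F (x + Pi.single j τ) i - F x i) / τ

/-- Stationarity measure `ψ_{p,r}(x)`. -/
def psi {n m : ℕ} (Ω : Set (Fin n → ℝ)) (F : (Fin n → ℝ) → (Fin m → ℝ))
    (h : (Fin m → ℝ) → ℝ) (J : (Fin n → ℝ) → Matrix (Fin m) (Fin n) ℝ)
    (p : ℝ≥0∞) (r : ℝ) (x : Fin n → ℝ) : ℝ :=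
  r⁻¹ * (h (F x) -
    sInf ((fun s => h (F x + (J x).mulVec s)) '' {s | x + s ∈ Ω ∧ pNorm p s ≤ r}))

/-- Approximate stationarity measure `η_{p,r}(x; A)`. -/
def eta {n m : ℕ} (Ω : Set (Fin n → ℝ)) (F : (Fin n → ℝ) → (Fin m → ℝ))
    (h : (Fin m → ℝ) → ℝ) (p : ℝ≥0∞) (r : ℝ) (x : Fin n → ℝ)
    (A : Matrix (Fin m) (Fin n) ℝ) : ℝ :=
  r⁻¹ * (h (F x) -
    sInf ((fun s => h (F x + A.mulVec s)) '' {s | x + s ∈ Ω ∧ pNorm p s ≤ r}))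

/-- The TRFD algorithm: `x`, `τ`, `Δ`, `A`, `d`, `ρ` are the iterates, finite-difference
stepsizes, trust-region radii, finite-difference Jacobian approximations, trial steps and
ratios generated by TRFD with parameters `ε, σ, α, θ, Δstar` from the point `x 0`. -/
def TRFDrun {n m : ℕ} (Ω : Set (Fin n → ℝ)) (F : (Fin n → ℝ) → (Fin m → ℝ))
    (h : (Fin m → ℝ) → ℝ) (p : ℝ≥0∞)
    (Lh cpm cnp ε σ α θ Δstar : ℝ)
    (x : ℕ → Fin n → ℝ) (τ Δ : ℕ → ℝ) (A : ℕ → Matrix (Fin m) (Fin n) ℝ)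
    (d : ℕ → Fin n → ℝ) (ρ : ℕ → ℝ) : Prop :=
  x 0 ∈ Ω ∧
  τ 0 = ε / (Lh * σ * cpm * cnp * Real.sqrt n) ∧
  τ 0 * Real.sqrt n ≤ Δ 0 ∧ Δ 0 ≤ Δstar ∧
  (∀ k, A k = fdMatrix F (x k) (τ k)) ∧
  (∀ k,
    -- unsuccessful iteration of type I
    (eta Ω F h p Δstar (x k) (A k) < ε / 2 ∧
      x (k + 1) = x k ∧ Δ (k + 1) = Δ k ∧ τ (k + 1) = τ k / 2) ∨
    (ε / 2 ≤ eta Ω F h p Δstar (x k) (A k) ∧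
      -- the trial step is feasible and achieves a `θ`-fraction of the optimal model decrease
      pNorm p (d k) ≤ Δ k ∧ x k + d k ∈ Ω ∧
      θ * (h (F (x k)) -
          sInf ((fun s => h (F (x k) + (A k).mulVec s)) ''
            {s | x k + s ∈ Ω ∧ pNorm p s ≤ Δ k})) ≤
        h (F (x k)) - h (F (x k) + (A k).mulVec (d k)) ∧
      ρ k = (h (F (x k)) - h (F (x k + d k))) /
            (h (F (x k)) - h (F (x k) + (A k).mulVec (d k))) ∧
      -- successful iteration
      ((α ≤ ρ k ∧ x (k + 1) = x k + d k ∧ Δ (k + 1) = min (2 * Δ k) Δstar ∧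
          τ (k + 1) = τ k) ∨
      -- unsuccessful iteration of type II
       (ρ k < α ∧ τ k * Real.sqrt n ≤ Δ k / 2 ∧
          x (k + 1) = x k ∧ Δ (k + 1) = Δ k / 2 ∧ τ (k + 1) = τ k) ∨
      -- unsuccessful iteration of type III
       (ρ k < α ∧ Δ k / 2 < τ k * Real.sqrt n ∧
          x (k + 1) = x k ∧ Δ (k + 1) = Δ k / 2 ∧ τ (k + 1) = τ k / 2))))

/-! At an iteration of type U² or U³ the model predicts a decrease of at least `θ Δ_k ε / 2`
(model decrease over radius is antitone in the radius by convexity, and `η ≥ ε / 2` at `Δ_*`),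
yet the ratio test fails, so the linearisation error `h(F(x_k + d_k)) - h(F(x_k) + A_k d_k)`
exceeds `1 - α` times that decrease. The Taylor bound for `F` and the finite-difference error
`‖J_F(x_k) - A_k‖ ≤ L_J τ_k √n / 2` bound this error by `L_h c_{p,2} L_J c_{2,p}² Δ_k²`, hence
`Δ_k > Δ̄ := (1 - α) θ ε / (2 L_h max(σ, L_J) c_{p,2} c_{2,p}²)`. Such iterations halve the radius
and only successful ones double it; since `Δ̄ ≤ Δ_0`, after `U` shrinking and `S` successful
iterations `Δ̄ 2^U < 2 Δ_0 2^S`. -/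

open scoped Matrix

lemma eucNorm_eq_norm {n : ℕ} (v : Fin n → ℝ) : eucNorm v = ‖WithLp.toLp 2 v‖ := by
  simp [eucNorm, EuclideanSpace.norm_eq]

lemma eucNorm_nonneg {n : ℕ} (v : Fin n → ℝ) : 0 ≤ eucNorm v := Real.sqrt_nonneg _

lemma eucNorm_smul {n : ℕ} (c : ℝ) (v : Fin n → ℝ) : eucNorm (c • v) = |c| * eucNorm v := by
  simp only [eucNorm_eq_norm, WithLp.toLp_smul, norm_smul, Real.norm_eq_abs]

lemma eucNorm_add_le {n : ℕ} (v w : Fin n → ℝ) : eucNorm (v + w) ≤ eucNorm v + eucNorm w := by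
  simpa only [eucNorm_eq_norm, WithLp.toLp_add] using norm_add_le _ _

open scoped Matrix.Norms.L2Operator in
lemma opNorm2_eq_l2_opNorm {m n : ℕ} (A : Matrix (Fin m) (Fin n) ℝ) : opNorm2 A = ‖A‖ := by
  rw [Matrix.l2_opNorm_def, ← ContinuousLinearMap.sSup_unitClosedBall_eq_norm, opNorm2]
  congr 1
  ext r
  constructor
  · rintro ⟨v, hv, rfl⟩
    refine ⟨WithLp.toLp 2 v, by simpa [eucNorm_eq_norm] using hv, ?_⟩
    simp [eucNorm_eq_norm]
  · rintro ⟨v, hv, rfl⟩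
    refine ⟨v.ofLp, by simpa [eucNorm_eq_norm] using hv, ?_⟩
    simp [eucNorm_eq_norm, Matrix.toLpLin_apply]

open scoped Matrix.Norms.L2Operator in
lemma eucNorm_mulVec_le_opNorm2 {m n : ℕ} (A : Matrix (Fin m) (Fin n) ℝ) (v : Fin n → ℝ) :
    eucNorm (A *ᵥ v) ≤ opNorm2 A * eucNorm v := by
  simpa [opNorm2_eq_l2_opNorm, eucNorm_eq_norm] using A.l2_opNorm_mulVec (WithLp.toLp 2 v)

open scoped Matrix.Norms.L2Operator in
lemma opNorm2_nonneg {m n : ℕ} (A : Matrix (Fin m) (Fin n) ℝ) : 0 ≤ opNorm2 A := by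
  rw [opNorm2_eq_l2_opNorm]; exact norm_nonneg A

lemma pNorm_zero {n : ℕ} {p : ℝ≥0∞} (hp : p ≠ 0) : pNorm p (0 : Fin n → ℝ) = 0 := by
  unfold pNorm
  split_ifs with hinf
  · simp
  · have hq : p.toReal ≠ 0 := ENNReal.toReal_ne_zero.mpr ⟨hp, hinf⟩
    simp [Real.zero_rpow hq, Real.zero_rpow (inv_ne_zero hq)]

lemma pNorm_smul {n : ℕ} {p : ℝ≥0∞} (hp : p ≠ 0) {t : ℝ} (ht : 0 ≤ t) (v : Fin n → ℝ) :
    pNorm p (t • v) = t * pNorm p v := by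
  unfold pNorm
  split_ifs with hinf
  · simp only [Pi.smul_apply, smul_eq_mul, abs_mul, abs_of_nonneg ht]
    exact (Real.mul_iSup_of_nonneg ht _).symm
  · have hq : p.toReal ≠ 0 := ENNReal.toReal_ne_zero.mpr ⟨hp, hinf⟩
    simp only [Pi.smul_apply, smul_eq_mul, abs_mul, abs_of_nonneg ht,
      Real.mul_rpow ht (abs_nonneg _), ← Finset.mul_sum]
    rw [Real.mul_rpow (by positivity) (by positivity), ← Real.rpow_mul ht, mul_one_div_cancel hq,
      Real.rpow_one]

theorem norm_image_add_sub_sub_fderiv_le {E G : Type*} [NormedAddCommGroup E] [NormedSpace ℝ E]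
    [NormedAddCommGroup G] [NormedSpace ℝ G] {f : E → G} {f' : E → E →L[ℝ] G}
    (hf : ∀ y, HasFDerivAt f (f' y) y) {x d : E} {K : ℝ}
    (hK : ∀ t ∈ Set.Ico (0 : ℝ) 1, ‖(f' (x + t • d) - f' x) d‖ ≤ K * t) :
    ‖f (x + d) - f x - f' x d‖ ≤ K / 2 := by
  let g : ℝ → G := fun t => f (x + t • d) - f x - t • f' x d
  have hg : ∀ t, HasDerivAt g ((f' (x + t • d) - f' x) d) t := by
    intro t
    have hline : HasDerivAt (fun t : ℝ => x + t • d) d t := by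
      simpa using ((hasDerivAt_id t).smul_const d).const_add x
    have := (((hf _).comp_hasDerivAt t hline).sub_const (f x)).sub
      ((hasDerivAt_id t).smul_const (f' x d))
    exact this.congr_deriv (by simp)
  have hB : ∀ t : ℝ, HasDerivAt (fun t => K / 2 * t ^ 2) (K * t) t := by
    intro t
    exact ((hasDerivAt_pow 2 t).const_mul (K / 2)).congr_deriv (by push_cast; ring)
  have := image_norm_le_of_norm_deriv_right_le_deriv_boundary (a := 0) (b := 1) (f := g)
    (fun t _ => (hg t).continuousAt.continuousWithinAt) (fun t _ => (hg t).hasDerivWithinAt)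
    (by simp [g]) hB hK (Set.right_mem_Icc.mpr zero_le_one)
  simpa [g] using this

lemma eucNorm_sub_sub_mulVec_le {n m : ℕ}
    {F : (Fin n → ℝ) → (Fin m → ℝ)} {J : (Fin n → ℝ) → Matrix (Fin m) (Fin n) ℝ}
    (hJ : ∀ y, HasFDerivAt F (LinearMap.toContinuousLinearMap (Matrix.mulVecLin (J y))) y)
    {LJ : ℝ} (hJLip : ∀ y z, opNorm2 (J y - J z) ≤ LJ * eucNorm (y - z)) (x d : Fin n → ℝ) :
    eucNorm (F (x + d) - F x - J x *ᵥ d) ≤ LJ / 2 * eucNorm d ^ 2 := by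
  let e := (EuclideanSpace.equiv (Fin m) ℝ).symm
  let f' : (Fin n → ℝ) → (Fin n → ℝ) →L[ℝ] EuclideanSpace ℝ (Fin m) := fun y =>
    (e : (Fin m → ℝ) →L[ℝ] EuclideanSpace ℝ (Fin m)).comp
      (Matrix.mulVecLin (J y)).toContinuousLinearMap
  have hK : ∀ t ∈ Set.Ico (0 : ℝ) 1,
      ‖(f' (x + t • d) - f' x) d‖ ≤ LJ * eucNorm d ^ 2 * t := by
    rintro t ⟨ht, -⟩
    calc _ = eucNorm ((J (x + t • d) - J x) *ᵥ d) := by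
          simp [f', e, eucNorm_eq_norm, Matrix.sub_mulVec]
      _ ≤ opNorm2 (J (x + t • d) - J x) * eucNorm d := eucNorm_mulVec_le_opNorm2 _ _
      _ ≤ LJ * eucNorm (t • d) * eucNorm d := by
          gcongr
          · exact eucNorm_nonneg d
          · simpa using hJLip (x + t • d) x
      _ = LJ * eucNorm d ^ 2 * t := by rw [eucNorm_smul, abs_of_nonneg ht]; ring
  have := norm_image_add_sub_sub_fderiv_le (f := fun y => e (F y)) (f' := f')
    (fun y => e.hasFDerivAt.comp y (hJ y)) hK
  simpa [f', e, eucNorm_eq_norm, mul_div_right_comm] using this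

lemma eucNorm_single {n : ℕ} (j : Fin n) (τ : ℝ) : eucNorm (Pi.single j τ) = |τ| := by
  simp [eucNorm_eq_norm]

lemma eucNorm_mulVec_le_of_eucNorm_col_le {m n : ℕ} (A : Matrix (Fin m) (Fin n) ℝ) {c : ℝ}
    (hc0 : 0 ≤ c) (hc : ∀ j, eucNorm (fun i => A i j) ≤ c) (v : Fin n → ℝ) :
    eucNorm (A *ᵥ v) ≤ c * Real.sqrt n * eucNorm v := by
  have hfrob : ∑ i, ∑ j, A i j ^ 2 ≤ n * c ^ 2 := by
    rw [Finset.sum_comm]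
    calc ∑ j, ∑ i, A i j ^ 2 ≤ ∑ _j : Fin n, c ^ 2 := by
          gcongr with j
          rw [← Real.sq_sqrt (Finset.sum_nonneg fun i _ => sq_nonneg (A i j))]
          exact pow_le_pow_left₀ (Real.sqrt_nonneg _) (hc j) 2
      _ = n * c ^ 2 := by simp
  calc eucNorm (A *ᵥ v) ≤ Real.sqrt ((n * c ^ 2) * ∑ j, v j ^ 2) := by
        rw [eucNorm]
        gcongr
        calc ∑ i, (A *ᵥ v) i ^ 2 ≤ ∑ i, (∑ j, A i j ^ 2) * ∑ j, v j ^ 2 :=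
              Finset.sum_le_sum fun i _ => Finset.sum_mul_sq_le_sq_mul_sq Finset.univ (A i) v
          _ = (∑ i, ∑ j, A i j ^ 2) * ∑ j, v j ^ 2 := by rw [Finset.sum_mul]
          _ ≤ _ := by gcongr
    _ = c * Real.sqrt n * eucNorm v := by
        rw [eucNorm, Real.sqrt_mul (by positivity), Real.sqrt_mul (by positivity),
          Real.sqrt_sq hc0, mul_comm (Real.sqrt n)]

section Jacobian

variable {n m : ℕ} {F : (Fin n → ℝ) → (Fin m → ℝ)} {J : (Fin n → ℝ) → Matrix (Fin m) (Fin n) ℝ}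
  {LJ : ℝ}

lemma eucNorm_jacobian_sub_fdMatrix_col_le
    (hJ : ∀ y, HasFDerivAt F (LinearMap.toContinuousLinearMap (Matrix.mulVecLin (J y))) y)
    (hJLip : ∀ y z, opNorm2 (J y - J z) ≤ LJ * eucNorm (y - z))
    (x : Fin n → ℝ) {τ : ℝ} (hτ : 0 < τ) (j : Fin n) :
    eucNorm (fun i => (J x - fdMatrix F x τ) i j) ≤ LJ * τ / 2 := by
  have hcol : (fun i => (J x - fdMatrix F x τ) i j) =
      (-τ⁻¹) • (F (x + Pi.single j τ) - F x - J x *ᵥ Pi.single j τ) := by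
    ext i
    simp only [Matrix.sub_apply, fdMatrix, Matrix.of_apply, Pi.smul_apply, Pi.sub_apply,
      Matrix.mulVec_single, smul_eq_mul, Matrix.col_apply, MulOpposite.smul_eq_mul_unop,
      MulOpposite.unop_op]
    field_simp
    ring
  rw [hcol, eucNorm_smul, abs_neg, abs_inv, abs_of_pos hτ]
  calc τ⁻¹ * eucNorm (F (x + Pi.single j τ) - F x - J x *ᵥ Pi.single j τ)
      ≤ τ⁻¹ * (LJ / 2 * eucNorm (Pi.single j τ) ^ 2) := by
        gcongr; exact eucNorm_sub_sub_mulVec_le hJ hJLip x _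
    _ = LJ * τ / 2 := by rw [eucNorm_single, abs_of_pos hτ]; field_simp

lemma eucNorm_sub_fdMatrix_linearization_le
    (hJ : ∀ y, HasFDerivAt F (LinearMap.toContinuousLinearMap (Matrix.mulVecLin (J y))) y)
    (hLJ : 0 ≤ LJ) (hJLip : ∀ y z, opNorm2 (J y - J z) ≤ LJ * eucNorm (y - z))
    (x : Fin n → ℝ) {τ : ℝ} (hτ : 0 < τ) (d : Fin n → ℝ) :
    eucNorm (F (x + d) - (F x + fdMatrix F x τ *ᵥ d)) ≤
      LJ / 2 * eucNorm d ^ 2 + LJ * τ / 2 * Real.sqrt n * eucNorm d := by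
  have hsplit : F (x + d) - (F x + fdMatrix F x τ *ᵥ d) =
      (F (x + d) - F x - J x *ᵥ d) + (J x - fdMatrix F x τ) *ᵥ d := by
    rw [Matrix.sub_mulVec]; abel
  rw [hsplit]
  refine (eucNorm_add_le _ _).trans (add_le_add (eucNorm_sub_sub_mulVec_le hJ hJLip x d) ?_)
  exact eucNorm_mulVec_le_of_eucNorm_col_le _ (by positivity)
    (eucNorm_jacobian_sub_fdMatrix_col_le hJ hJLip x hτ) d

end Jacobian

lemma mul_sub_csInf_image_le {V : Type*} [AddCommGroup V] [Module ℝ V] {φ : V → ℝ}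
    (hφ : ConvexOn ℝ Set.univ φ) {S K : Set V} {t : ℝ} (ht0 : 0 < t) (ht1 : t ≤ 1)
    (hS : S.Nonempty) (hK : BddBelow (φ '' K)) (hSK : ∀ s ∈ S, t • s ∈ K) :
    t * (φ 0 - sInf (φ '' S)) ≤ φ 0 - sInf (φ '' K) := by
  suffices (sInf (φ '' K) - (1 - t) * φ 0) / t ≤ sInf (φ '' S) by
    rw [div_le_iff₀' ht0] at this; linarith
  refine le_csInf (hS.image φ) ?_
  rintro _ ⟨s, hs, rfl⟩
  rw [div_le_iff₀' ht0]
  have hseg : φ (t • s) ≤ (1 - t) * φ 0 + t * φ s := by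
    simpa using hφ.2 (Set.mem_univ 0) (Set.mem_univ s) (sub_nonneg.mpr ht1) ht0.le (by ring)
  linarith [csInf_le hK ⟨t • s, hSK s hs, rfl⟩]

lemma convexOn_comp_add_mulVec {m n : ℕ} {h : (Fin m → ℝ) → ℝ} (hh : ConvexOn ℝ Set.univ h)
    (w : Fin m → ℝ) (A : Matrix (Fin m) (Fin n) ℝ) :
    ConvexOn ℝ Set.univ (fun s => h (w + A *ᵥ s)) := by
  have := hh.comp_affineMap (AffineMap.const ℝ (Fin n → ℝ) w + (Matrix.mulVecLin A).toAffineMap)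
  rwa [Set.preimage_univ] at this

section Model

variable {n m : ℕ} {p : ℝ≥0∞} {h : (Fin m → ℝ) → ℝ} {Lh cpm cnp : ℝ}

lemma bddBelow_image_add_mulVec (hLh : 0 ≤ Lh)
    (hhLip : ∀ z w, |h z - h w| ≤ Lh * pNorm p (z - w))
    (hcpm0 : 0 ≤ cpm) (hcpm : ∀ z : Fin m → ℝ, pNorm p z ≤ cpm * eucNorm z)
    (hcnp0 : 0 ≤ cnp) (hcnp : ∀ v : Fin n → ℝ, eucNorm v ≤ cnp * pNorm p v)
    (w : Fin m → ℝ) (A : Matrix (Fin m) (Fin n) ℝ) {K : Set (Fin n → ℝ)} {r : ℝ}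
    (hK : ∀ s ∈ K, pNorm p s ≤ r) :
    BddBelow ((fun s => h (w + A *ᵥ s)) '' K) := by
  refine ⟨h w - Lh * (cpm * (opNorm2 A * (cnp * r))), ?_⟩
  rintro _ ⟨s, hs, rfl⟩
  have hAs : pNorm p (A *ᵥ s) ≤ cpm * (opNorm2 A * (cnp * r)) :=
    calc pNorm p (A *ᵥ s) ≤ cpm * eucNorm (A *ᵥ s) := hcpm _
      _ ≤ cpm * (opNorm2 A * eucNorm s) := by gcongr; exact eucNorm_mulVec_le_opNorm2 A s
      _ ≤ cpm * (opNorm2 A * (cnp * r)) := by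
          gcongr
          · exact opNorm2_nonneg A
          · exact (hcnp s).trans (by gcongr; exact hK s hs)
  have hLip := hhLip (w + A *ᵥ s) w
  rw [add_sub_cancel_left] at hLip
  linarith [neg_abs_le (h (w + A *ᵥ s) - h w), mul_le_mul_of_nonneg_left hAs hLh]

lemma eta_le_eta_of_le (hp : p ≠ 0) {Ω : Set (Fin n → ℝ)} (hΩ : Convex ℝ Ω)
    (hh : ConvexOn ℝ Set.univ h) (hLh : 0 ≤ Lh)
    (hhLip : ∀ z w, |h z - h w| ≤ Lh * pNorm p (z - w))
    (hcpm0 : 0 ≤ cpm) (hcpm : ∀ z : Fin m → ℝ, pNorm p z ≤ cpm * eucNorm z)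
    (hcnp0 : 0 ≤ cnp) (hcnp : ∀ v : Fin n → ℝ, eucNorm v ≤ cnp * pNorm p v)
    (F : (Fin n → ℝ) → (Fin m → ℝ)) {x : Fin n → ℝ} (hx : x ∈ Ω) (A : Matrix (Fin m) (Fin n) ℝ)
    {r R : ℝ} (hr : 0 < r) (hrR : r ≤ R) :
    eta Ω F h p R x A ≤ eta Ω F h p r x A := by
  have hR : 0 < R := hr.trans_le hrR
  have hscale := mul_sub_csInf_image_le (convexOn_comp_add_mulVec hh (F x) A)
    (S := {s | x + s ∈ Ω ∧ pNorm p s ≤ R}) (K := {s | x + s ∈ Ω ∧ pNorm p s ≤ r})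
    (div_pos hr hR) ((div_le_one hR).mpr hrR)
    ⟨0, by simpa [pNorm_zero hp] using ⟨hx, hR.le⟩⟩
    (bddBelow_image_add_mulVec hLh hhLip hcpm0 hcpm hcnp0 hcnp (F x) A fun s hs => hs.2)
    (by
      rintro s ⟨hsΩ, hsR⟩
      refine ⟨?_, ?_⟩
      · convert hΩ hx hsΩ (sub_nonneg.mpr ((div_le_one hR).mpr hrR)) (div_pos hr hR).le
          (by ring) using 1
        module
      · rw [pNorm_smul hp (div_pos hr hR).le, div_mul_eq_mul_div, div_le_iff₀ hR]
        exact mul_le_mul_of_nonneg_left hsR hr.le)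
  simp only [Matrix.mulVec_zero, add_zero] at hscale
  unfold eta
  calc R⁻¹ * _ = r⁻¹ * (r / R * (h (F x) -
        sInf ((fun s => h (F x + A *ᵥ s)) '' {s | x + s ∈ Ω ∧ pNorm p s ≤ R}))) := by
        field_simp
    _ ≤ _ := by gcongr

end Model

section Iteration

variable {n m : ℕ} {p : ℝ≥0∞} {Ω : Set (Fin n → ℝ)} {F : (Fin n → ℝ) → (Fin m → ℝ)}
  {J : (Fin n → ℝ) → Matrix (Fin m) (Fin n) ℝ} {h : (Fin m → ℝ) → ℝ} {LJ Lh cpm cnp : ℝ}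

lemma sub_fdMatrix_linearization_le
    (hJ : ∀ y, HasFDerivAt F (LinearMap.toContinuousLinearMap (Matrix.mulVecLin (J y))) y)
    (hLJ : 0 ≤ LJ) (hJLip : ∀ y z, opNorm2 (J y - J z) ≤ LJ * eucNorm (y - z))
    (hLh : 0 ≤ Lh) (hhLip : ∀ z w, |h z - h w| ≤ Lh * pNorm p (z - w))
    (hcpm0 : 0 ≤ cpm) (hcpm : ∀ z : Fin m → ℝ, pNorm p z ≤ cpm * eucNorm z)
    (hcnp1 : 1 ≤ cnp) (hcnp : ∀ v : Fin n → ℝ, eucNorm v ≤ cnp * pNorm p v)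
    (x : Fin n → ℝ) {τ Δ : ℝ} (hτ : 0 < τ) (hτΔ : τ * Real.sqrt n ≤ Δ)
    {d : Fin n → ℝ} (hd : pNorm p d ≤ Δ) :
    h (F (x + d)) - h (F x + fdMatrix F x τ *ᵥ d) ≤ Lh * cpm * LJ * cnp ^ 2 * Δ ^ 2 := by
  have hΔ : 0 ≤ Δ := (by positivity : 0 ≤ τ * Real.sqrt n).trans hτΔ
  have hd2 : eucNorm d ≤ cnp * Δ := (hcnp d).trans (by gcongr)
  have hlin : eucNorm (F (x + d) - (F x + fdMatrix F x τ *ᵥ d)) ≤ LJ * cnp ^ 2 * Δ ^ 2 :=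
    calc _ ≤ LJ / 2 * eucNorm d ^ 2 + LJ / 2 * (τ * Real.sqrt n) * eucNorm d := by
          convert eucNorm_sub_fdMatrix_linearization_le hJ hLJ hJLip x hτ d using 2; ring
      _ ≤ LJ / 2 * (cnp * Δ) ^ 2 + LJ / 2 * (cnp * Δ) * (cnp * Δ) := by
          have hτc : τ * Real.sqrt n ≤ cnp * Δ := hτΔ.trans (le_mul_of_one_le_left hΔ hcnp1)
          have := eucNorm_nonneg d
          gcongr LJ / 2 * ?_ ^ 2 + LJ / 2 * ?_ * ?_
      _ = LJ * cnp ^ 2 * Δ ^ 2 := by ring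
  calc h (F (x + d)) - h (F x + fdMatrix F x τ *ᵥ d)
      ≤ Lh * pNorm p (F (x + d) - (F x + fdMatrix F x τ *ᵥ d)) := (le_abs_self _).trans (hhLip _ _)
    _ ≤ Lh * (cpm * (LJ * cnp ^ 2 * Δ ^ 2)) := by gcongr; exact (hcpm _).trans (by gcongr)
    _ = Lh * cpm * LJ * cnp ^ 2 * Δ ^ 2 := by ring

lemma lt_mul_radius_of_ratio_lt (hp : p ≠ 0) (hΩ : Convex ℝ Ω)
    (hJ : ∀ y, HasFDerivAt F (LinearMap.toContinuousLinearMap (Matrix.mulVecLin (J y))) y)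
    (hLJ : 0 ≤ LJ) (hJLip : ∀ y z, opNorm2 (J y - J z) ≤ LJ * eucNorm (y - z))
    (hh : ConvexOn ℝ Set.univ h) (hLh : 0 ≤ Lh)
    (hhLip : ∀ z w, |h z - h w| ≤ Lh * pNorm p (z - w))
    (hcpm0 : 0 ≤ cpm) (hcpm : ∀ z : Fin m → ℝ, pNorm p z ≤ cpm * eucNorm z)
    (hcnp1 : 1 ≤ cnp) (hcnp : ∀ v : Fin n → ℝ, eucNorm v ≤ cnp * pNorm p v)
    {ε α θ Δstar τ Δ : ℝ} (hε : 0 < ε) (hα1 : α < 1) (hθ0 : 0 < θ)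
    {x d : Fin n → ℝ} (hx : x ∈ Ω) (hτ : 0 < τ) (hτΔ : τ * Real.sqrt n ≤ Δ) (hΔ : 0 < Δ)
    (hΔs : Δ ≤ Δstar) (hd : pNorm p d ≤ Δ)
    (hη : ε / 2 ≤ eta Ω F h p Δstar x (fdMatrix F x τ))
    (hθdec : θ * (h (F x) - sInf ((fun s => h (F x + fdMatrix F x τ *ᵥ s)) ''
        {s | x + s ∈ Ω ∧ pNorm p s ≤ Δ})) ≤ h (F x) - h (F x + fdMatrix F x τ *ᵥ d))
    (hρ : (h (F x) - h (F (x + d))) / (h (F x) - h (F x + fdMatrix F x τ *ᵥ d)) < α) :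
    (1 - α) * θ * ε < 2 * Lh * LJ * cpm * cnp ^ 2 * Δ := by
  set B := fdMatrix F x τ
  have hmodel : Δ * (ε / 2) ≤
      h (F x) - sInf ((fun s => h (F x + B *ᵥ s)) '' {s | x + s ∈ Ω ∧ pNorm p s ≤ Δ}) :=
    calc Δ * (ε / 2) ≤ Δ * eta Ω F h p Δ x B := by
          gcongr
          exact hη.trans (eta_le_eta_of_le hp hΩ hh hLh hhLip hcpm0 hcpm (by linarith) hcnp F hx B
            hΔ hΔs)
      _ = _ := by unfold eta; field_simp
  have hD : θ * (Δ * (ε / 2)) ≤ h (F x) - h (F x + B *ᵥ d) :=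
    (mul_le_mul_of_nonneg_left hmodel hθ0.le).trans hθdec
  have hact := (div_lt_iff₀ (lt_of_lt_of_le (by positivity) hD)).mp hρ
  have herr :=
    sub_fdMatrix_linearization_le hJ hLJ hJLip hLh hhLip hcpm0 hcpm hcnp1 hcnp x hτ hτΔ hd
  have hfin : (1 - α) * θ * ε * Δ < 2 * Lh * LJ * cpm * cnp ^ 2 * Δ * Δ := by
    nlinarith [mul_le_mul_of_nonneg_left hD (sub_nonneg.2 hα1.le)]
  exact lt_of_mul_lt_mul_right hfin hΔ.le

end Iteration

section Counting

variable {Δ : ℕ → ℝ} {P Q : ℕ → Prop} [DecidablePred P] [DecidablePred Q]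

lemma mul_two_pow_count_le
    (hstep : ∀ k, Δ (k + 1) * 2 ^ (if P k then 1 else 0) ≤ Δ k * 2 ^ (if Q k then 1 else 0))
    (k : ℕ) : Δ k * 2 ^ Nat.count P k ≤ Δ 0 * 2 ^ Nat.count Q k := by
  induction k with
  | zero => simp
  | succ k ih =>
    rw [Nat.count_succ, Nat.count_succ, pow_add, pow_add]
    calc Δ (k + 1) * (2 ^ Nat.count P k * 2 ^ (if P k then 1 else 0))
        = Δ (k + 1) * 2 ^ (if P k then 1 else 0) * 2 ^ Nat.count P k := by ring
      _ ≤ Δ k * 2 ^ (if Q k then 1 else 0) * 2 ^ Nat.count P k :=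
          mul_le_mul_of_nonneg_right (hstep k) (by positivity)
      _ = Δ k * 2 ^ Nat.count P k * 2 ^ (if Q k then 1 else 0) := by ring
      _ ≤ Δ 0 * 2 ^ Nat.count Q k * 2 ^ (if Q k then 1 else 0) :=
          mul_le_mul_of_nonneg_right ih (by positivity)
      _ = Δ 0 * (2 ^ Nat.count Q k * 2 ^ (if Q k then 1 else 0)) := by ring

lemma mul_two_pow_count_lt
    (hstep : ∀ k, Δ (k + 1) * 2 ^ (if P k then 1 else 0) ≤ Δ k * 2 ^ (if Q k then 1 else 0))
    {r : ℝ} (hP : ∀ k, P k → r < Δ k) (h0 : r < 2 * Δ 0) (hΔ0 : 0 ≤ Δ 0) (k : ℕ) :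
    r * 2 ^ Nat.count P k < 2 * Δ 0 * 2 ^ Nat.count Q k := by
  induction k with
  | zero => simpa using h0
  | succ k ih =>
    have hQ : 2 * Δ 0 * 2 ^ Nat.count Q k ≤ 2 * Δ 0 * 2 ^ Nat.count Q (k + 1) :=
      mul_le_mul_of_nonneg_left (pow_le_pow_right₀ one_le_two (Nat.count_monotone Q k.le_succ))
        (by positivity)
    by_cases hPk : P k
    · calc r * 2 ^ Nat.count P (k + 1) = 2 * (r * 2 ^ Nat.count P k) := by
            rw [Nat.count_succ, if_pos hPk, pow_succ]; ring
        _ < 2 * (Δ k * 2 ^ Nat.count P k) := by gcongr; exact hP k hPk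
        _ ≤ 2 * (Δ 0 * 2 ^ Nat.count Q k) := by linarith [mul_two_pow_count_le hstep k]
        _ ≤ _ := by linarith
    · rw [Nat.count_succ, if_neg hPk, add_zero]
      exact ih.trans_le hQ

end Counting

lemma natCast_le_logb_add_of_mul_two_pow_lt {r c : ℝ} {U S : ℕ} (hr : 0 < r)
    (h : r * 2 ^ U < c * 2 ^ S) : (U : ℝ) ≤ Real.logb 2 (c / r) + S := by
  have hc : 0 < c / r := div_pos (pos_of_mul_pos_left ((by positivity : 0 < r * 2 ^ U).trans h)
    (by positivity)) hr
  suffices (U : ℝ) - S < Real.logb 2 (c / r) by linarith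
  rw [Real.lt_logb_iff_rpow_lt one_lt_two hc, Real.rpow_sub two_pos, Real.rpow_natCast,
    Real.rpow_natCast, div_lt_div_iff₀ (by positivity) hr]
  linarith

lemma ncard_setOf_lt_and (P : ℕ → Prop) [DecidablePred P] (T : ℕ) :
    {k | k < T ∧ P k}.ncard = Nat.count P T := by
  rw [Nat.count_eq_card_filter_range, ← Set.ncard_coe_finset]
  congr 1
  ext k
  simp

lemma ncard_lt_and_le_logb_add {Δ : ℕ → ℝ} {P Q : ℕ → Prop} [DecidablePred P] [DecidablePred Q]
    (hstep : ∀ k, Δ (k + 1) * 2 ^ (if P k then 1 else 0) ≤ Δ k * 2 ^ (if Q k then 1 else 0))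
    {r : ℝ} (hP : ∀ k, P k → r < Δ k) (hr : 0 < r) (h0 : r < 2 * Δ 0) (T : ℕ) :
    ({k | k < T ∧ P k}.ncard : ℝ) ≤ Real.logb 2 (2 * Δ 0 / r) + {k | k < T ∧ Q k}.ncard := by
  rw [ncard_setOf_lt_and, ncard_setOf_lt_and]
  exact natCast_le_logb_add_of_mul_two_pow_lt hr
    (mul_two_pow_count_lt hstep hP h0 (by linarith) T)

namespace TRFDrun

variable {n m : ℕ} {Ω : Set (Fin n → ℝ)} {F : (Fin n → ℝ) → (Fin m → ℝ)}
  {h : (Fin m → ℝ) → ℝ} {p : ℝ≥0∞} {Lh cpm cnp ε σ α θ Δstar : ℝ}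
  {x : ℕ → Fin n → ℝ} {τ Δ : ℕ → ℝ} {A : ℕ → Matrix (Fin m) (Fin n) ℝ}
  {d : ℕ → Fin n → ℝ} {ρ : ℕ → ℝ}

lemma invariant (hrun : TRFDrun Ω F h p Lh cpm cnp ε σ α θ Δstar x τ Δ A d ρ)
    (hτ0 : 0 < τ 0) (k : ℕ) :
    x k ∈ Ω ∧ 0 < τ k ∧ τ k * Real.sqrt n ≤ Δ k ∧ Δ k ≤ Δstar := by
  obtain ⟨hx0, -, hΔ0, hΔ0s, -, hstep⟩ := hrun
  induction k with
  | zero => exact ⟨hx0, hτ0, hΔ0, hΔ0s⟩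
  | succ k ih =>
    obtain ⟨hx, hτ, hτΔ, hΔs⟩ := ih
    have hτn : 0 ≤ τ k * Real.sqrt n := by positivity
    rcases hstep k with ⟨-, hx', hΔ', hτ'⟩ | ⟨-, -, hdΩ, -, -, hcase⟩
    · rw [hx', hΔ', hτ']
      exact ⟨hx, by positivity, by linarith, hΔs⟩
    rcases hcase with ⟨-, hx', hΔ', hτ'⟩ | ⟨-, hhalf, hx', hΔ', hτ'⟩ | ⟨-, -, hx', hΔ', hτ'⟩
    · rw [hx', hΔ', hτ']
      exact ⟨hdΩ, hτ, le_min (by linarith) (hτΔ.trans hΔs), min_le_right _ _⟩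
    · rw [hx', hΔ', hτ']
      exact ⟨hx, hτ, hhalf, by linarith⟩
    · rw [hx', hΔ', hτ']
      exact ⟨hx, by positivity, by linarith, by linarith⟩

lemma radius_step (hrun : TRFDrun Ω F h p Lh cpm cnp ε σ α θ Δstar x τ Δ A d ρ) (k : ℕ) :
    Δ (k + 1) * 2 ^ (if ε / 2 ≤ eta Ω F h p Δstar (x k) (A k) ∧ ρ k < α then 1 else 0) ≤
      Δ k * 2 ^ (if ε / 2 ≤ eta Ω F h p Δstar (x k) (A k) ∧ α ≤ ρ k then 1 else 0) := by
  rcases hrun.2.2.2.2.2 k with ⟨hη, -, hΔ', -⟩ | ⟨hη, -, -, -, -, hcase⟩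
  · simp [not_le.mpr hη, hΔ']
  rcases hcase with ⟨hρ, -, hΔ', -⟩ | ⟨hρ, -, -, hΔ', -⟩ | ⟨hρ, -, -, hΔ', -⟩
  · simp [hη, hρ, not_lt.mpr hρ, hΔ', mul_comm]
  all_goals simp [hη, hρ, not_le.mpr hρ, hΔ']

lemma lt_mul_radius {J : (Fin n → ℝ) → Matrix (Fin m) (Fin n) ℝ} {LJ : ℝ}
    (hrun : TRFDrun Ω F h p Lh cpm cnp ε σ α θ Δstar x τ Δ A d ρ) (hn : 1 ≤ n) (hτ0 : 0 < τ 0)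
    (hp : p ≠ 0) (hΩ : Convex ℝ Ω)
    (hJ : ∀ y, HasFDerivAt F (LinearMap.toContinuousLinearMap (Matrix.mulVecLin (J y))) y)
    (hLJ : 0 ≤ LJ) (hJLip : ∀ y z, opNorm2 (J y - J z) ≤ LJ * eucNorm (y - z))
    (hh : ConvexOn ℝ Set.univ h) (hLh : 0 ≤ Lh)
    (hhLip : ∀ z w, |h z - h w| ≤ Lh * pNorm p (z - w))
    (hcpm0 : 0 ≤ cpm) (hcpm : ∀ z : Fin m → ℝ, pNorm p z ≤ cpm * eucNorm z)
    (hcnp1 : 1 ≤ cnp) (hcnp : ∀ v : Fin n → ℝ, eucNorm v ≤ cnp * pNorm p v)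
    (hε : 0 < ε) (hα1 : α < 1) (hθ0 : 0 < θ) {k : ℕ}
    (hk : ε / 2 ≤ eta Ω F h p Δstar (x k) (A k) ∧ ρ k < α) :
    (1 - α) * θ * ε < 2 * Lh * LJ * cpm * cnp ^ 2 * Δ k := by
  obtain ⟨hx, hτ, hτΔ, hΔs⟩ := hrun.invariant hτ0 k
  have hΔ : 0 < Δ k := lt_of_lt_of_le (mul_pos hτ (Real.sqrt_pos.mpr (by exact_mod_cast hn))) hτΔ
  rcases hrun.2.2.2.2.2 k with ⟨hη, -⟩ | ⟨-, hd, -, hθd, hρd, -⟩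
  · exact absurd hk.1 (not_le.mpr hη)
  rw [hrun.2.2.2.2.1 k] at hk hθd hρd
  exact lt_mul_radius_of_ratio_lt hp hΩ hJ hLJ hJLip hh hLh hhLip hcpm0 hcpm hcnp1 hcnp hε hα1 hθ0
    hx hτ hτΔ hΔ hΔs hd hk.1 hθd (hρd ▸ hk.2)

lemma threshold_le_radius_zero {LJ : ℝ}
    (hrun : TRFDrun Ω F h p Lh cpm cnp ε σ α θ Δstar x τ Δ A d ρ) (hn : 1 ≤ n)
    (hLh : 0 < Lh) (hcpm1 : 1 ≤ cpm) (hcnp1 : 1 ≤ cnp) (hε : 0 < ε) (hσ : 0 < σ)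
    (hα0 : 0 < α) (hα1 : α < 1) (hθ1 : θ ≤ 1) :
    (1 - α) * θ * ε / (2 * Lh * max σ LJ * cpm * cnp ^ 2) ≤ Δ 0 := by
  have hsn : 0 < Real.sqrt n := Real.sqrt_pos.mpr (by exact_mod_cast hn)
  have hM : σ ≤ max σ LJ := le_max_left σ LJ
  have hαθ : (1 - α) * θ ≤ 1 := by nlinarith [mul_le_mul_of_nonneg_left hθ1 (sub_nonneg.2 hα1.le)]
  have hθσ : (1 - α) * θ * σ ≤ 2 * max σ LJ * cnp := by nlinarith
  calc (1 - α) * θ * ε / (2 * Lh * max σ LJ * cpm * cnp ^ 2)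
      ≤ ε / (Lh * σ * cpm * cnp) := by
        rw [div_le_div_iff₀ (by positivity) (by positivity)]
        calc (1 - α) * θ * ε * (Lh * σ * cpm * cnp) = (1 - α) * θ * σ * (ε * Lh * cpm * cnp) := by
              ring
          _ ≤ 2 * max σ LJ * cnp * (ε * Lh * cpm * cnp) := by gcongr
          _ = ε * (2 * Lh * max σ LJ * cpm * cnp ^ 2) := by ring
    _ = τ 0 * Real.sqrt n := by rw [hrun.2.1]; field_simp
    _ ≤ Δ 0 := hrun.2.2.1

end TRFDrun

theorem stmt12_general
    {n m : ℕ} (hn : 1 ≤ n) (p : ℝ≥0∞) (hp : 1 ≤ p)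
    (Ω : Set (Fin n → ℝ)) (hΩcv : Convex ℝ Ω)
    (F : (Fin n → ℝ) → (Fin m → ℝ)) (J : (Fin n → ℝ) → Matrix (Fin m) (Fin n) ℝ)
    (hJ : ∀ y, HasFDerivAt F (LinearMap.toContinuousLinearMap (Matrix.mulVecLin (J y))) y)
    (LJ : ℝ) (hLJ : 0 < LJ)
    (hJLip : ∀ y z, opNorm2 (J y - J z) ≤ LJ * eucNorm (y - z))
    (h : (Fin m → ℝ) → ℝ) (hconv : ConvexOn ℝ Set.univ h)
    (Lh : ℝ) (hLh : 0 < Lh)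
    (hhLip : ∀ z w, |h z - h w| ≤ Lh * pNorm p (z - w))
    (cnp cpm : ℝ) (hcnp1 : 1 ≤ cnp) (hcpm1 : 1 ≤ cpm)
    (hcnp : ∀ v : Fin n → ℝ, eucNorm v ≤ cnp * pNorm p v)
    (hcpm : ∀ z : Fin m → ℝ, pNorm p z ≤ cpm * eucNorm z)
    (ε σ α θ Δstar : ℝ) (hε : 0 < ε) (hσ : 0 < σ)
    (hα0 : 0 < α) (hα1 : α < 1) (hθ0 : 0 < θ) (hθ1 : θ ≤ 1)
    (x : ℕ → Fin n → ℝ) (τ Δ : ℕ → ℝ) (A : ℕ → Matrix (Fin m) (Fin n) ℝ)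
    (d : ℕ → Fin n → ℝ) (ρ : ℕ → ℝ)
    (hrun : TRFDrun Ω F h p Lh cpm cnp ε σ α θ Δstar x τ Δ A d ρ)
    (T : ℕ) :
    (Set.ncard {k : ℕ | k < T ∧ ε / 2 ≤ eta Ω F h p Δstar (x k) (A k) ∧ ρ k < α} : ℝ) ≤
      Real.logb 2 (4 * Lh * max σ LJ * cpm * cnp ^ 2 * Δ 0 / ((1 - α) * θ) / ε) +
      (Set.ncard {k : ℕ | k < T ∧ ε / 2 ≤ eta Ω F h p Δstar (x k) (A k) ∧ α ≤ ρ k} : ℝ) := by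
  have hsn : 0 < Real.sqrt n := Real.sqrt_pos.mpr (by exact_mod_cast hn)
  have hτ0 : 0 < τ 0 := by rw [hrun.2.1]; positivity
  set r := (1 - α) * θ * ε / (2 * Lh * max σ LJ * cpm * cnp ^ 2) with hr_def
  have hr : 0 < r := div_pos (mul_pos (mul_pos (sub_pos.2 hα1) hθ0) hε) (by positivity)
  have hC : 4 * Lh * max σ LJ * cpm * cnp ^ 2 * Δ 0 / ((1 - α) * θ) / ε = 2 * Δ 0 / r := by
    rw [hr_def]
    field_simp [(sub_pos.2 hα1).ne']
    ring
  rw [hC]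
  refine ncard_lt_and_le_logb_add hrun.radius_step (fun k hk => ?_) hr
    (by linarith [hrun.threshold_le_radius_zero (LJ := LJ) hn hLh hcpm1 hcnp1 hε hσ hα0 hα1 hθ1]) T
  obtain ⟨-, hτk, hτΔk, -⟩ := hrun.invariant hτ0 k
  have hΔk : 0 ≤ Δ k := (by positivity : 0 ≤ τ k * Real.sqrt n).trans hτΔk
  have hlt := hrun.lt_mul_radius hn hτ0 (zero_lt_one.trans_le hp).ne' hΩcv hJ hLJ.le hJLip hconv
    hLh.le hhLip (by linarith) hcpm hcnp1 hcnp hε hα1 hθ0 hk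
  rw [hr_def, div_lt_iff₀ (by positivity)]
  calc (1 - α) * θ * ε < 2 * Lh * LJ * cpm * cnp ^ 2 * Δ k := hlt
    _ ≤ 2 * Lh * max σ LJ * cpm * cnp ^ 2 * Δ k := by
        gcongr
        exact le_max_right σ LJ
    _ = _ := by ring

/-- Lemma 3.7: bound on the number of iterations of types U² and U³. -/
theorem stmt12
    {n m : ℕ} (hn : 1 ≤ n) (hm : 1 ≤ m) (p : ℝ≥0∞) (hp : 1 ≤ p)
    (Ω : Set (Fin n → ℝ)) (hΩne : Ω.Nonempty) (hΩcl : IsClosed Ω) (hΩcv : Convex ℝ Ω)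
    (F : (Fin n → ℝ) → (Fin m → ℝ)) (J : (Fin n → ℝ) → Matrix (Fin m) (Fin n) ℝ)
    (hJ : ∀ y, HasFDerivAt F (LinearMap.toContinuousLinearMap (Matrix.mulVecLin (J y))) y)
    (LJ : ℝ) (hLJ : 0 < LJ)
    (hJLip : ∀ y z, opNorm2 (J y - J z) ≤ LJ * eucNorm (y - z))
    (h : (Fin m → ℝ) → ℝ) (hconv : ConvexOn ℝ Set.univ h)
    (Lh : ℝ) (hLh : 0 < Lh)
    (hhLip : ∀ z w, |h z - h w| ≤ Lh * pNorm p (z - w))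
    (cnp cpm : ℝ) (hcnp1 : 1 ≤ cnp) (hcpm1 : 1 ≤ cpm)
    (hcnp : ∀ v : Fin n → ℝ, eucNorm v ≤ cnp * pNorm p v)
    (hcpm : ∀ z : Fin m → ℝ, pNorm p z ≤ cpm * eucNorm z)
    (ε σ α θ Δstar : ℝ) (hε : 0 < ε) (hσ : 0 < σ)
    (hα0 : 0 < α) (hα1 : α < 1) (hθ0 : 0 < θ) (hθ1 : θ ≤ 1)
    (x : ℕ → Fin n → ℝ) (τ Δ : ℕ → ℝ) (A : ℕ → Matrix (Fin m) (Fin n) ℝ)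
    (d : ℕ → Fin n → ℝ) (ρ : ℕ → ℝ)
    (hrun : TRFDrun Ω F h p Lh cpm cnp ε σ α θ Δstar x τ Δ A d ρ)
    (T : ℕ) (hT1 : 1 ≤ T) (hT : ∀ k < T, ε < psi Ω F h J p Δstar (x k)) :
    (Set.ncard {k : ℕ | k < T ∧ ε / 2 ≤ eta Ω F h p Δstar (x k) (A k) ∧ ρ k < α} : ℝ) ≤
      Real.logb 2 (4 * Lh * max σ LJ * cpm * cnp ^ 2 * Δ 0 / ((1 - α) * θ) / ε) +
      (Set.ncard {k : ℕ | k < T ∧ ε / 2 ≤ eta Ω F h p Δstar (x k) (A k) ∧ α ≤ ρ k} : ℝ) :=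
  stmt12_general hn p hp Ω hΩcv F J hJ LJ hLJ hJLip h hconv Lh hLh hhLip cnp cpm hcnp1 hcpm1 hcnp
    hcpm ε σ α θ Δstar hε hσ hα0 hα1 hθ0 hθ1 x τ Δ A d ρ hrun T
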